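/- The exotic map ξ : Av(132, 312) → Av(132, 312), defined by π^ξ = ω⁻¹(reverse(π^ω)), is an automorphism of the pattern class Av(132, 312): it is a bijection of Av(132, 312) and for all σ, π ∈ Av(132, 312), σ is contained in π if and only if σ^ξ is contained in π^ξ. -/

import Mathlib

/-- A permutation of length `n ≥ 1` in one-line notation: a nonempty list of
natural numbers that is a rearrangement of `1, …, n` where `n` is its length. -/
def IsPermList (l : List ℕ) : Prop := l ≠ [] ∧ l.Perm (List.range' 1 l.length)

instance (l : List ℕ) : Decidable (IsPermList l) :=
  inferInstanceAs (Decidable (l ≠ [] ∧ l.Perm (List.range' 1 l.length)))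

/-- The type of all (finite, nonempty) permutations. -/
abbrev Permu := {l : List ℕ // IsPermList l}

/-- Helper to construct explicit permutations. -/
def p (l : List ℕ) (h : IsPermList l := by decide) : Permu := ⟨l, h⟩

/-- Pattern containment: `σ` is contained in `τ` when some (not necessarily
contiguous) subsequence of `τ` is order isomorphic to `σ`. -/
def Contains (σ τ : Permu) : Prop :=
  ∃ u : List ℕ, u.Sublist τ.val ∧ u.length = σ.val.length ∧
    ∀ i j : ℕ, i < u.length → j < u.length →
      (u.getD i 0 < u.getD j 0 ↔ σ.val.getD i 0 < σ.val.getD j 0)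

/-- A pattern class: a set of permutations closed downwards under containment. -/
def IsPatternClass (A : Set Permu) : Prop :=
  ∀ σ τ : Permu, τ ∈ A → Contains σ τ → σ ∈ A

/-- `Av B` is the set of permutations containing no member of the set `B`. -/
def Av (B : Set Permu) : Set Permu := {π | ∀ β ∈ B, ¬ Contains β π}

/-- An isomorphism of pattern classes is a bijection which preserves and
reflects containment. -/
def IsIso {A B : Set Permu} (f : ↥A → ↥B) : Prop :=
  Function.Bijective f ∧
  ∀ σ τ : ↥A, Contains σ.val τ.val ↔ Contains (f σ).val (f τ).val

/-- The shadow of `τ`: the permutations of length one less that are contained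
in `τ`. -/
def shadow (τ : Permu) : Set Permu :=
  {σ : Permu | σ.val.length + 1 = τ.val.length ∧ Contains σ τ}
/-- The wedge class Av(132, 312). -/
def V : Set Permu := Av {p [1,3,2], p [3,1,2]}

/-- The map ω: for π of length n, the word c₂…cₙ over {a,b} where cᵢ = a
(encoded as ) iff π(i) > π(1), and cᵢ = b (encoded ) otherwise. -/
def omegaMap (l : List ℕ) : List Bool :=
  match l with
  | [] => []
  | x :: xs => xs.map (fun y => decide (x < y))

/-!
Every entry of a permutation in Av(132, 312) after the first lies above or below the first entry,
and those above increase while those below decrease from left to right. Hence the relative order of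
two entries is read off from their positions and the letters of π^ω there, and π is
determined by π^ω. It follows that σ ≤ π iff σ^ω is a subword of π^ω: an occurrence of σ in π
carries the word of σ as a subword, and conversely a subword of π^ω is realised by the first entry
of π together with the later entries carrying its letters. Reversal is an involution that preserves
the subword order, so ξ is an automorphism.
-/

open List

def SameOrder (u v : List ℕ) : Prop :=
  u.length = v.length ∧
    ∀ i j, i < u.length → j < u.length → (u.getD i 0 < u.getD j 0 ↔ v.getD i 0 < v.getD j 0)

theorem contains_iff_exists_sublist_sameOrder {σ τ : Permu} :
    Contains σ τ ↔ ∃ u, u <+ τ.val ∧ SameOrder u σ.val :=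
  Iff.rfl

theorem Permu.nodup (π : Permu) : π.val.Nodup :=
  π.2.2.nodup_iff.mpr nodup_range'

theorem map_getD_range (l : List ℕ) : (range l.length).map (l.getD · 0) = l :=
  ext_getElem (by simp) fun i _ h => by simp [getElem?_eq_getElem h]

theorem countP_range'_le {n x : ℕ} (hx : x ≤ n) : (range' 1 n).countP (· ≤ x) = x := by
  obtain ⟨k, rfl⟩ := Nat.exists_eq_add_of_le hx
  rw [← range'_append, countP_append, countP_eq_length.mpr, countP_eq_zero.mpr]
  · simp
  · intro a ha
    simp only [mem_range'_1] at ha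
    simp only [decide_eq_true_eq, not_le]
    omega
  · intro a ha
    simp only [mem_range'_1] at ha
    simp only [decide_eq_true_eq]
    omega

theorem getD_eq_countP_le {l : List ℕ} (hl : l.Perm (range' 1 l.length)) {i : ℕ}
    (hi : i < l.length) :
    l.getD i 0 = (range l.length).countP (fun j => l.getD j 0 ≤ l.getD i 0) := by
  have hmem : l.getD i 0 ∈ range' 1 l.length :=
    hl.subset (by rw [getD_eq_getElem _ _ hi]; exact getElem_mem hi)
  calc l.getD i 0 = (range' 1 l.length).countP (· ≤ l.getD i 0) :=
        (countP_range'_le (by rw [mem_range'_1] at hmem; omega)).symm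
    _ = l.countP (· ≤ l.getD i 0) := (hl.countP_eq _).symm
    _ = ((range l.length).map (l.getD · 0)).countP (· ≤ l.getD i 0) := by rw [map_getD_range]
    _ = _ := countP_map

theorem Permu.eq_of_sameOrder {σ π : Permu} (h : SameOrder σ.val π.val) : σ = π := by
  obtain ⟨hlen, hord⟩ := h
  refine Subtype.ext (ext_getElem hlen fun i h₁ h₂ => ?_)
  rw [← getD_eq_getElem _ 0 h₁, ← getD_eq_getElem _ 0 h₂, getD_eq_countP_le σ.2.2 h₁,
    getD_eq_countP_le π.2.2 h₂, ← hlen]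
  refine countP_congr fun j hj => ?_
  simpa only [decide_eq_true_eq, not_lt] using (hord i j h₁ (mem_range.mp hj)).not

def IsWedge (l : List ℕ) : Prop :=
  ∀ x y z, [x, y, z] <+ l → ¬ (x < z ∧ z < y) ∧ ¬ (y < z ∧ z < x)

theorem IsWedge.sublist {l u : List ℕ} (hl : IsWedge l) (hu : u <+ l) : IsWedge u :=
  fun x y z h => hl x y z (h.trans hu)

theorem contains_132_iff (π : Permu) :
    Contains (p [1, 3, 2]) π ↔ ∃ x y z, [x, y, z] <+ π.val ∧ x < z ∧ z < y := by
  constructor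
  · rintro ⟨u, hu, hlen, hord⟩
    obtain ⟨x, y, z, rfl⟩ := length_eq_three.mp hlen
    exact ⟨x, y, z, hu, by simpa using (hord 0 2 (by simp) (by simp)).mpr (by decide),
      by simpa using (hord 2 1 (by simp) (by simp)).mpr (by decide)⟩
  · rintro ⟨x, y, z, hs, hxz, hzy⟩
    refine ⟨[x, y, z], hs, rfl, fun i j hi hj => ?_⟩
    simp only [length_cons, length_nil] at hi hj
    interval_cases i <;> interval_cases j <;> (simp only [p, getD_cons_zero, getD_cons_succ]; omega)

theorem contains_312_iff (π : Permu) :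
    Contains (p [3, 1, 2]) π ↔ ∃ x y z, [x, y, z] <+ π.val ∧ y < z ∧ z < x := by
  constructor
  · rintro ⟨u, hu, hlen, hord⟩
    obtain ⟨x, y, z, rfl⟩ := length_eq_three.mp hlen
    exact ⟨x, y, z, hu, by simpa using (hord 1 2 (by simp) (by simp)).mpr (by decide),
      by simpa using (hord 2 0 (by simp) (by simp)).mpr (by decide)⟩
  · rintro ⟨x, y, z, hs, hyz, hzx⟩
    refine ⟨[x, y, z], hs, rfl, fun i j hi hj => ?_⟩
    simp only [length_cons, length_nil] at hi hj
    interval_cases i <;> interval_cases j <;> (simp only [p, getD_cons_zero, getD_cons_succ]; omega)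

theorem mem_V_iff (π : Permu) : π ∈ V ↔ IsWedge π.val := by
  simp only [V, Av, Set.mem_insert_iff, Set.mem_singleton_iff, forall_eq_or_imp, forall_eq,
    Set.mem_ofPred_eq, contains_132_iff, contains_312_iff, IsWedge]
  grind

def WedgeRel (h x y : ℕ) : Prop := (h < x → h < y → x < y) ∧ (x < h → y < h → y < x)

theorem isWedge_cons_iff {h : ℕ} {t : List ℕ} (hnd : (h :: t).Nodup) :
    IsWedge (h :: t) ↔ t.Pairwise (WedgeRel h) := by
  constructor
  · intro hw
    refine pairwise_iff_forall_sublist.mpr fun {a b} hab => ?_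
    have hbetween := hw h a b (hab.cons_cons h)
    have hd := hnd.sublist (hab.cons_cons h)
    simp only [nodup_cons, mem_cons, not_or, mem_nil_iff, not_false_eq_true, and_true,
      nodup_nil] at hd
    unfold WedgeRel
    omega
  · intro hpw x y z hs
    rcases sublist_cons_iff.mp hs with hs | ⟨r, hr, hrt⟩
    · have hd := hnd.sublist (hs.cons_cons h)
      simp only [nodup_cons, mem_cons, not_or, mem_nil_iff, not_false_eq_true, and_true,
        nodup_nil] at hd
      have := hpw.sublist hs
      simp only [pairwise_cons, mem_cons, forall_eq_or_imp, not_mem_nil,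
        IsEmpty.forall_iff, implies_true, and_true, Pairwise.nil, WedgeRel] at this
      omega
    · obtain ⟨rfl, rfl⟩ := List.cons.inj hr
      have hd := hnd.sublist (hrt.cons_cons x)
      simp only [nodup_cons, mem_cons, not_or, mem_nil_iff, not_false_eq_true, and_true,
        nodup_nil] at hd
      have : WedgeRel x y z := rel_of_pairwise_cons (hpw.sublist hrt) (mem_singleton_self z)
      unfold WedgeRel at this
      omega

theorem omegaMap_cons (h : ℕ) (t : List ℕ) :
    omegaMap (h :: t) = t.map (fun y => decide (h < y)) :=
  rfl

theorem omegaMap_length (l : List ℕ) : (omegaMap l).length = l.length - 1 := by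
  cases l <;> simp [omegaMap]

theorem getD_omegaMap_cons (h : ℕ) (t : List ℕ) (i : ℕ) :
    (omegaMap (h :: t)).getD i false = decide (h < t.getD i 0) :=
  getD_map t 0 _

/-- Entries above the first one increase and those below it decrease along the word, so these keys
order the entries of a wedge permutation with word `w`. -/
def wordKey (w : List Bool) : ℕ → ℤ
  | 0 => 0
  | i + 1 => if w.getD i false then i + 1 else -(i + 1)

theorem getD_lt_getD_iff_wordKey_lt {l : List ℕ} (hnd : l.Nodup) (hw : IsWedge l) {i j : ℕ}
    (hi : i < l.length) (hj : j < l.length) :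
    l.getD i 0 < l.getD j 0 ↔ wordKey (omegaMap l) i < wordKey (omegaMap l) j := by
  obtain ⟨h, t, rfl⟩ := exists_cons_of_ne_nil (ne_nil_of_length_pos (by omega : 0 < l.length))
  have hpw := (isWedge_cons_iff hnd).mp hw
  have hne : ∀ k < t.length, t.getD k 0 ≠ h := fun k hk e =>
    (nodup_cons.mp hnd).1 (by rw [← e, getD_eq_getElem _ _ hk]; exact getElem_mem hk)
  have hrel : ∀ k m, k < m → m < t.length →
      WedgeRel h (t.getD k 0) (t.getD m 0) ∧ t.getD k 0 ≠ t.getD m 0 := fun k m hkm hm => by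
    rw [getD_eq_getElem _ _ (hkm.trans hm), getD_eq_getElem _ _ hm]
    exact ⟨pairwise_iff_getElem.mp hpw k m _ hm hkm,
      fun e => hkm.ne ((nodup_cons.mp hnd).2.getElem_inj_iff.mp e)⟩
  simp only [length_cons] at hi hj
  rcases i with _ | i <;> rcases j with _ | j
  · simp
  · have := hne j (by omega)
    simp only [wordKey, getD_omegaMap_cons, getD_cons_zero, getD_cons_succ, decide_eq_true_eq]
    split_ifs <;> omega
  · have := hne i (by omega)
    simp only [wordKey, getD_omegaMap_cons, getD_cons_zero, getD_cons_succ, decide_eq_true_eq]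
    split_ifs <;> omega
  · have := hne i (by omega)
    have := hne j (by omega)
    simp only [wordKey, getD_omegaMap_cons, getD_cons_succ, decide_eq_true_eq]
    rcases lt_trichotomy i j with hij | rfl | hij
    · have := hrel i j hij (by omega)
      unfold WedgeRel at this
      split_ifs <;> omega
    · simp
    · have := hrel j i hij (by omega)
      unfold WedgeRel at this
      split_ifs <;> omega

theorem sameOrder_of_omegaMap_eq {u v : List ℕ} (hu : u.Nodup) (hv : v.Nodup) (hwu : IsWedge u)
    (hwv : IsWedge v) (hu₀ : u ≠ []) (hv₀ : v ≠ []) (h : omegaMap u = omegaMap v) :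
    SameOrder u v := by
  have hlen : u.length = v.length := by
    have := congrArg length h
    rw [omegaMap_length, omegaMap_length] at this
    have := length_pos_of_ne_nil hu₀
    have := length_pos_of_ne_nil hv₀
    omega
  refine ⟨hlen, fun i j hi hj => ?_⟩
  rw [getD_lt_getD_iff_wordKey_lt hu hwu hi hj,
    getD_lt_getD_iff_wordKey_lt hv hwv (hlen ▸ hi) (hlen ▸ hj), h]

theorem omegaMap_eq_of_sameOrder {u v : List ℕ} (h : SameOrder u v) : omegaMap u = omegaMap v := by
  obtain ⟨hlen, hord⟩ := h
  rcases u with _ | ⟨a, s⟩ <;> rcases v with _ | ⟨b, r⟩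
  · rfl
  all_goals simp only [length_cons, length_nil, reduceCtorEq, add_left_inj] at hlen
  refine ext_getElem (by simp [omegaMap_cons, hlen]) fun k h₁ h₂ => ?_
  simp only [omegaMap_cons, length_map] at h₁ h₂
  have := hord 0 (k + 1) (by simp) (by simp only [length_cons]; omega)
  simp only [getD_cons_zero, getD_cons_succ, getD_eq_getElem _ _ h₁,
    getD_eq_getElem _ _ h₂] at this
  simp [omegaMap_cons, this]

theorem omegaMap_sublist_of_sublist {l u : List ℕ} (hnd : l.Nodup) (hw : IsWedge l)
    (hu : u <+ l) (hu₀ : u ≠ []) : omegaMap u <+ omegaMap l := by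
  obtain ⟨a, s, rfl⟩ := exists_cons_of_ne_nil hu₀
  obtain ⟨h, t, rfl⟩ := exists_cons_of_ne_nil (hu₀ ∘ fun hl => sublist_nil.mp (hl ▸ hu))
  rcases sublist_cons_iff.mp hu with hut | ⟨r, hr, hrt⟩
  · -- `a` lies on the same side of every later entry `x` as `h`, as `[h, a, x]` is no 132 or 312
    have hside : s.map (fun x => decide (a < x)) = s.map (fun x => decide (h < x)) := by
      refine map_congr_left fun x hx => ?_
      have hs : [h, a, x] <+ h :: t :=
        ((singleton_sublist.mpr hx).cons_cons a |>.trans hut).cons_cons h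
      have hd := hnd.sublist hs
      simp only [nodup_cons, mem_cons, not_or, mem_nil_iff, not_false_eq_true, and_true,
        nodup_nil] at hd
      have := hw h a x hs
      simp only [decide_eq_decide]
      omega
    rw [omegaMap_cons, omegaMap_cons, hside]
    exact ((sublist_cons_self a s).trans hut).map _
  · obtain ⟨rfl, rfl⟩ := List.cons.inj hr
    exact hrt.map _

theorem contains_iff_omegaMap_sublist {σ π : Permu} (hσ : IsWedge σ.val) (hπ : IsWedge π.val) :
    Contains σ π ↔ omegaMap σ.val <+ omegaMap π.val := by
  rw [contains_iff_exists_sublist_sameOrder]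
  constructor
  · rintro ⟨u, hu, hord⟩
    have hu₀ : u ≠ [] := by
      rintro rfl
      exact σ.2.1 (length_eq_zero_iff.mp hord.1.symm)
    rw [← omegaMap_eq_of_sameOrder hord]
    exact omegaMap_sublist_of_sublist π.nodup hπ hu hu₀
  · intro hs
    obtain ⟨h, t, ht⟩ := exists_cons_of_ne_nil π.2.1
    rw [ht, omegaMap_cons] at hs
    obtain ⟨s, hst, hsw⟩ := sublist_map_iff.mp hs
    have hsub : h :: s <+ π.val := ht ▸ hst.cons_cons h
    exact ⟨h :: s, hsub, sameOrder_of_omegaMap_eq (π.nodup.sublist hsub) σ.nodup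
      (hπ.sublist hsub) hσ (cons_ne_nil _ _) σ.2.1 (by rw [omegaMap_cons, hsw])⟩

/-- Letters `a` take the values `hi, hi + 1, …`; the `k` letters `b` take `lo + k - 1, …, lo`,
written as `lo + (number of later b's)` to avoid truncated subtraction. -/
def wedgeTail : List Bool → ℕ → ℕ → List ℕ
  | [], _, _ => []
  | true :: w, lo, hi => hi :: wedgeTail w lo (hi + 1)
  | false :: w, lo, hi => (lo + w.count false) :: wedgeTail w lo hi

theorem wedgeTail_perm (w : List Bool) (lo hi : ℕ) :
    (wedgeTail w lo hi).Perm (range' lo (w.count false) ++ range' hi (w.count true)) := by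
  induction w generalizing hi with
  | nil => simp [wedgeTail]
  | cons b w ih =>
    cases b
    · rw [wedgeTail, count_cons_self, count_cons_of_ne (by decide), range'_concat, append_assoc,
        one_mul, singleton_append]
      exact ((ih hi).cons _).trans perm_middle.symm
    · rw [wedgeTail, count_cons_self, count_cons_of_ne (by decide), range'_succ]
      exact ((ih (hi + 1)).cons hi).trans perm_middle.symm

theorem mem_wedgeTail {w : List Bool} {lo hi y : ℕ} (hy : y ∈ wedgeTail w lo hi) :
    y < lo + w.count false ∨ hi ≤ y := by
  have := (wedgeTail_perm w lo hi).subset hy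
  simp only [mem_append, mem_range'_1] at this
  omega

theorem map_wedgeTail (w : List Bool) {lo hi m : ℕ} (hlo : lo + w.count false ≤ m) (hhi : m < hi) :
    (wedgeTail w lo hi).map (fun y => decide (m < y)) = w := by
  induction w generalizing hi with
  | nil => rfl
  | cons b w ih =>
    cases b
    · rw [count_cons_self] at hlo
      simp only [wedgeTail, map_cons, ih (by omega) hhi, cons.injEq, decide_eq_false_iff_not,
        not_lt, and_true]
      omega
    · rw [count_cons_of_ne (by decide)] at hlo
      simp only [wedgeTail, map_cons, ih hlo (by omega : m < hi + 1), cons.injEq,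
        decide_eq_true_eq, and_true]
      omega

theorem pairwise_wedgeTail (w : List Bool) {lo hi m : ℕ} (hlo : lo + w.count false ≤ m)
    (hhi : m < hi) : (wedgeTail w lo hi).Pairwise (WedgeRel m) := by
  induction w generalizing hi with
  | nil => exact Pairwise.nil
  | cons b w ih =>
    cases b
    · rw [count_cons_self] at hlo
      refine pairwise_cons.mpr ⟨fun y hy => ?_, ih (by omega) hhi⟩
      have := mem_wedgeTail hy
      unfold WedgeRel
      omega
    · rw [count_cons_of_ne (by decide)] at hlo
      refine pairwise_cons.mpr ⟨fun y hy => ?_, ih hlo (by omega)⟩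
      have := mem_wedgeTail hy
      unfold WedgeRel
      omega

def wedgeList (w : List Bool) : List ℕ :=
  (w.count false + 1) :: wedgeTail w 1 (w.count false + 2)

theorem wedgeList_perm (w : List Bool) : (wedgeList w).Perm (range' 1 (w.length + 1)) := by
  have h : (wedgeList w).Perm
      (range' 1 (w.count false) ++ range' (1 + w.count false) (w.count true + 1)) := by
    rw [Nat.add_comm 1, range'_succ]
    exact ((wedgeTail_perm w 1 _).cons _).trans perm_middle.symm
  rwa [range'_append_1, ← Nat.add_assoc, Nat.add_comm (w.count false),
    count_true_add_count_false] at h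

theorem isWedge_wedgeList (w : List Bool) : IsWedge (wedgeList w) :=
  (isWedge_cons_iff ((wedgeList_perm w).nodup_iff.mpr nodup_range')).mpr
    (pairwise_wedgeTail w (Nat.add_comm _ _).le (by omega))

theorem omegaMap_wedgeList (w : List Bool) : omegaMap (wedgeList w) = w :=
  map_wedgeTail w (Nat.add_comm _ _).le (by omega)

def wedgePerm (w : List Bool) : Permu :=
  ⟨wedgeList w, cons_ne_nil _ _, by rw [(wedgeList_perm w).length_eq]; simpa using wedgeList_perm w⟩

theorem wedgePerm_mem_V (w : List Bool) : wedgePerm w ∈ V :=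
  (mem_V_iff _).mpr (isWedge_wedgeList w)

theorem omegaMap_wedgePerm (w : List Bool) : omegaMap (wedgePerm w).val = w :=
  omegaMap_wedgeList w

theorem wedgePerm_omegaMap {π : Permu} (hπ : π ∈ V) : wedgePerm (omegaMap π.val) = π :=
  Permu.eq_of_sameOrder (sameOrder_of_omegaMap_eq (wedgePerm _).nodup π.nodup
    (isWedge_wedgeList _) ((mem_V_iff π).mp hπ) (cons_ne_nil _ _) π.2.1 (omegaMap_wedgePerm _))

/-- the exotic map ξ = ω ∘ reverse ∘ ω⁻¹, i.e. the map on
Av(132,312) characterised by ω(π^ξ) = reverse(ω(π)), is an automorphism of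
the pattern class Av(132, 312). -/
theorem statement_4 :
    ∃ ξ : Permu → Permu,
      (∀ π : Permu, π ∈ V →
        ξ π ∈ V ∧ omegaMap (ξ π).val = (omegaMap π.val).reverse) ∧
      Set.BijOn ξ V V ∧
      (∀ σ π : Permu, σ ∈ V → π ∈ V →
        (Contains σ π ↔ Contains (ξ σ) (ξ π))) := by
  refine ⟨fun π => wedgePerm (omegaMap π.val).reverse,
    fun π _ => ⟨wedgePerm_mem_V _, omegaMap_wedgePerm _⟩, ?_, fun σ π hσ hπ => ?_⟩
  · have hinv : Set.LeftInvOn (fun π => wedgePerm (omegaMap π.val).reverse)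
        (fun π => wedgePerm (omegaMap π.val).reverse) V := fun π hπ => by
      simp only [omegaMap_wedgePerm, reverse_reverse, wedgePerm_omegaMap hπ]
    exact Set.InvOn.bijOn ⟨hinv, hinv⟩ (fun _ _ => wedgePerm_mem_V _)
      (fun _ _ => wedgePerm_mem_V _)
  · rw [contains_iff_omegaMap_sublist ((mem_V_iff σ).mp hσ) ((mem_V_iff π).mp hπ),
      contains_iff_omegaMap_sublist (isWedge_wedgeList _) (isWedge_wedgeList _),
      omegaMap_wedgePerm, omegaMap_wedgePerm, reverse_sublist]
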